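/- Grafting–pruning bijection: for rooted trees, there is a bijection between (isomorphism classes of) pairs consisting of a tree T together with a cut c (a root-preserving subtree S ⊆ T), and (isomorphism classes of) triples (P, S, λ) where S is a tree, P is a forest (finite family of trees), and λ is a bijection between the leaves of S and the roots of P. The forward map sends (T, c) to the crown forest P_c of ideal subtrees of T at the leaves of S; the inverse grafts the trees of P onto the leaves of S. -/
import Mathlib


inductive OT : Type
  | edge : OT
  | node : List OT → OT

namespace OT

mutual
/-- The cuts of a tree: pairs `(S, P)` where `S` is the subtree containing the root
(the part below the cut) and `P` is the list of crown trees (the ideal subtrees of the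
total tree generated by the leaves of `S`), in the left-to-right order of those leaves. -/
def cuts : OT → List (OT × List OT)
  | .edge => [(.edge, [.edge])]
  | .node l => (.edge, [.node l]) :: (cutsList l).map (fun p => (.node p.1, p.2))

def cutsList : List OT → List (List OT × List OT)
  | [] => [([], [])]
  | c :: cs => (cuts c).flatMap (fun p => (cutsList cs).map (fun q => (p.1 :: q.1, p.2 ++ q.2)))
end

/-- isomorphism of operadic trees (the closure of permuting the inputs of nodes) -/
inductive tiso : OT → OT → Prop
  | refl (t : OT) : tiso t t

/-- number of leaves of a tree -/
def numLeaves : OT → ℕ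
  | .edge => 1
  | .node l => (l.attach.map (fun x => numLeaves x.1)).sum
decreasing_by
  have := List.sizeOf_lt_of_mem x.2
  simp only [OT.node.sizeOf_spec]
  omega

mutual
/-- graft trees (taken in order from the state list) onto the leaves of a tree,
returning also the unused remainder of the state list -/
def graftAux : OT → List OT → OT × List OT
  | .edge, [] => (.edge, [])
  | .edge, t :: r => (t, r)
  | .node l, ts => ((.node (graftList l ts).1 : OT), (graftList l ts).2)

def graftList : List OT → List OT → List OT × List OT
  | [], ts => ([], ts)
  | c :: cs, ts => ((graftAux c ts).1 :: (graftList cs (graftAux c ts).2).1,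
      (graftList cs (graftAux c ts).2).2)
end

/-- graft a list of trees onto the leaves of a tree (leaves taken in left-to-right order) -/
def graft (S : OT) (l : List OT) : OT := (graftAux S l).1

theorem numLeaves_node (l : List OT) : numLeaves (.node l) = (l.map numLeaves).sum := by
  rw [numLeaves]
  congr 1
  simp

mutual
theorem graftAux_append : ∀ (S : OT) (ts us : List OT), ts.length = numLeaves S →
    graftAux S (ts ++ us) = ((graftAux S ts).1, us)
  | .edge, ts, us, h => by
    simp only [numLeaves] at h
    obtain ⟨t, rfl⟩ := List.length_eq_one_iff.mp h
    simp [graftAux]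
  | .node l, ts, us, h => by
    rw [numLeaves_node] at h
    simp only [graftAux, graftList_append l ts us h]
theorem graftList_append : ∀ (M ts us : List OT), ts.length = (M.map numLeaves).sum →
    graftList M (ts ++ us) = ((graftList M ts).1, us)
  | [], ts, us, h => by
    simp only [List.map_nil, List.sum_nil, List.length_eq_zero_iff] at h
    subst h
    simp [graftList]
  | m :: ms, ts, us, h => by
    simp only [List.map_cons, List.sum_cons] at h
    have hn : numLeaves m ≤ ts.length := by omega
    have hts : ts = ts.take (numLeaves m) ++ ts.drop (numLeaves m) := (List.take_append_drop _ _).symm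
    have h1 : (ts.take (numLeaves m)).length = numLeaves m := by simp [hn]
    have h2 : (ts.drop (numLeaves m)).length = (ms.map numLeaves).sum := by simp; omega
    rw [hts, List.append_assoc]
    simp only [graftList, graftAux_append m _ _ h1, graftList_append ms _ _ h2]
end

mutual
theorem mem_cuts : ∀ (T S : OT) (P : List OT),
    (S, P) ∈ cuts T ↔ P.length = numLeaves S ∧ graftAux S P = (T, [])
  | .edge, S, P => by
    simp only [cuts, List.mem_singleton, Prod.mk.injEq]
    constructor
    · rintro ⟨rfl, rfl⟩
      simp [numLeaves, graftAux]
    · rintro ⟨h1, h2⟩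
      cases S with
      | edge =>
        simp only [numLeaves] at h1
        obtain ⟨t, rfl⟩ := List.length_eq_one_iff.mp h1
        simp only [graftAux, Prod.mk.injEq] at h2
        exact ⟨rfl, by simp [h2.1]⟩
      | node m => simp [graftAux, Prod.mk.injEq] at h2
  | .node l, S, P => by
    simp only [cuts, List.mem_cons, List.mem_map, Prod.mk.injEq]
    constructor
    · rintro (⟨rfl, rfl⟩ | ⟨⟨M, Q⟩, hmem, rfl, rfl⟩)
      · simp [numLeaves, graftAux]
      · obtain ⟨h1, h2⟩ := (mem_cutsList l M Q).mp hmem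
        refine ⟨by rw [numLeaves_node]; exact h1, ?_⟩
        simp [graftAux, h2]
    · rintro ⟨h1, h2⟩
      cases S with
      | edge =>
        left
        simp only [numLeaves] at h1
        obtain ⟨t, rfl⟩ := List.length_eq_one_iff.mp h1
        simp only [graftAux, Prod.mk.injEq] at h2
        exact ⟨rfl, by simp [h2.1]⟩
      | node m =>
        right
        simp only [graftAux, Prod.mk.injEq, node.injEq] at h2
        refine ⟨(m, P), (mem_cutsList l m P).mpr ⟨?_, ?_⟩, rfl, rfl⟩
        · rw [numLeaves_node] at h1; exact h1
        · exact Prod.ext_iff.mpr ⟨h2.1, h2.2⟩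

theorem mem_cutsList : ∀ (cs M P : List OT),
    (M, P) ∈ cutsList cs ↔ P.length = (M.map numLeaves).sum ∧ graftList M P = (cs, [])
  | [], M, P => by
    simp only [cutsList, List.mem_singleton, Prod.mk.injEq]
    constructor
    · rintro ⟨rfl, rfl⟩
      simp [graftList]
    · rintro ⟨h1, h2⟩
      cases M with
      | nil =>
        simp only [graftList, Prod.mk.injEq] at h2
        exact ⟨rfl, h2.2⟩
      | cons m ms => simp [graftList, Prod.mk.injEq] at h2
  | c :: cs, M, P => by
    simp only [cutsList, List.mem_flatMap, List.mem_map, Prod.mk.injEq]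
    constructor
    · rintro ⟨⟨Sc, Pc⟩, hp, ⟨Ms, Ps⟩, hq, rfl, rfl⟩
      obtain ⟨hl1, hg1⟩ := (mem_cuts c Sc Pc).mp hp
      obtain ⟨hl2, hg2⟩ := (mem_cutsList cs Ms Ps).mp hq
      constructor
      · simp [hl1, hl2]
      · simp only [graftList, graftAux_append Sc Pc Ps hl1, hg1, hg2]
    · rintro ⟨h1, h2⟩
      cases M with
      | nil => simp [graftList, Prod.mk.injEq] at h2
      | cons m ms =>
        simp only [List.map_cons, List.sum_cons] at h1
        have hn : numLeaves m ≤ P.length := by omega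
        have h1' : (P.take (numLeaves m)).length = numLeaves m := by simp [hn]
        have h2' : (P.drop (numLeaves m)).length = (ms.map numLeaves).sum := by simp; omega
        rw [(List.take_append_drop (numLeaves m) P).symm] at h2
        simp only [graftList, graftAux_append m _ _ h1', Prod.mk.injEq, List.cons.injEq] at h2
        have hsnd : (graftAux m (P.take (numLeaves m))).2 = [] := by
          have := graftAux_append m (P.take (numLeaves m)) [] h1'
          rw [List.append_nil] at this
          rw [this]
        refine ⟨(m, P.take (numLeaves m)),
          (mem_cuts c m _).mpr ⟨h1', Prod.ext_iff.mpr ⟨h2.1.1, hsnd⟩⟩,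
          (ms, P.drop (numLeaves m)),
          (mem_cutsList cs ms _).mpr ⟨h2', Prod.ext_iff.mpr ⟨h2.1.2, h2.2⟩⟩,
          rfl, List.take_append_drop _ _⟩
end

theorem length_of_mem_cuts {T S : OT} {P : List OT} (h : (S, P) ∈ cuts T) :
    P.length = numLeaves S := ((mem_cuts T S P).mp h).1

mutual
theorem nodup_cuts : ∀ T : OT, (cuts T).Nodup
  | .edge => by simp [cuts]
  | .node l => by
    simp only [cuts, List.nodup_cons]
    refine ⟨?_, (nodup_cutsList l).map ?_⟩
    · simp only [List.mem_map, Prod.mk.injEq, not_exists, not_and]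
      exact fun p _ h _ => OT.noConfusion h
    · rintro ⟨a, b⟩ ⟨a', b'⟩ h
      simp only [Prod.mk.injEq, node.injEq] at h
      simp [h.1, h.2]

theorem nodup_cutsList : ∀ cs : List OT, (cutsList cs).Nodup
  | [] => by simp [cutsList]
  | c :: cs => by
    rw [cutsList, List.nodup_flatMap]
    refine ⟨fun p _ => (nodup_cutsList cs).map ?_, ?_⟩
    · rintro ⟨a, b⟩ ⟨a', b'⟩ h
      simp only [Prod.mk.injEq, List.cons.injEq] at h
      exact Prod.ext_iff.mpr ⟨h.1.2, List.append_cancel_left h.2⟩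
    · refine (nodup_cuts c).imp_of_mem ?_
      rintro ⟨a, b⟩ ⟨a', b'⟩ ha ha' hne
      simp only [Function.onFun]
      rw [List.disjoint_left]
      rintro x hx hx'
      simp only [List.mem_map] at hx hx'
      obtain ⟨⟨m, q⟩, hq, rfl⟩ := hx
      obtain ⟨⟨m', q'⟩, hq', hx'⟩ := hx'
      simp only [Prod.mk.injEq, List.cons.injEq] at hx'
      have hb : b'.length = b.length := by
        rw [length_of_mem_cuts ha, length_of_mem_cuts ha', hx'.1.1]
      obtain ⟨hb2, _⟩ := List.append_inj hx'.2.symm (by omega)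
      exact hne (Prod.ext_iff.mpr ⟨hx'.1.1.symm, hb2⟩)
end

end OT

/-- Grafting–pruning bijection: for each rooted tree `T`, the cuts of `T` (pairs of the
subtree `S` below the cut and the crown forest `P_c`, i.e. the list of ideal subtrees of
`T` at the leaves of `S`, matched to the leaves of `S`) are in bijection with the pairs
`(S, P)` of a tree `S` and a list of trees `P` matched with the leaves of `S`
(`P.length = numLeaves S`) such that grafting the trees of `P` onto the leaves of `S`
yields `T`.  The forward map is pruning, the inverse is grafting. -/
theorem stmt18 (T : OT) :
    (OT.cuts T).Nodup ∧
    ∀ (S : OT) (P : List OT),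
      ((S, P) ∈ OT.cuts T ↔ P.length = OT.numLeaves S ∧ OT.graft S P = T) := by
  refine ⟨OT.nodup_cuts T, fun S P => ?_⟩
  rw [OT.mem_cuts]
  simp only [OT.graft]
  constructor
  · rintro ⟨h1, h2⟩
    exact ⟨h1, by rw [h2]⟩
  · rintro ⟨h1, h2⟩
    refine ⟨h1, ?_⟩
    have hsnd : (OT.graftAux S P).2 = [] := by
      have := OT.graftAux_append S P [] h1
      rw [List.append_nil] at this
      rw [this]
    exact Prod.ext_iff.mpr ⟨h2, hsnd⟩
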